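/- Let M be an invertible real n×n matrix, E an arbitrary real n×n matrix, and P = MMᵀ. Define S = ∫₀^∞ e^{−tP}(PEᵀ + EP)e^{−tP} dt. Then S is symmetric, S satisfies SP + PS = PEᵀ + EP, and (EM − SM)Mᵀ is skew-symmetric; consequently EM = K M^{−T} + S M where K = (EM − SM)Mᵀ is skew-symmetric. -/

import Mathlib

/-!
Diagonalise `P = U diag(v) Uᵀ` with `U` orthogonal and `v > 0`. Then
`e^{-tP} Q e^{-tP} = U (W(t) ⊙ UᵀQU) Uᵀ` with `W(t)ₖₗ = e^{-(vₖ+vₗ)t}`, so the integral is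
`S = U (C ⊙ UᵀQU) Uᵀ` with `Cₖₗ = (vₖ+vₗ)⁻¹`, and `C ⊙ R` solves `X diag(v) + diag(v) X = R`
entry by entry. Symmetry of `S` is inherited from the integrand; skew-symmetry of
`(EM - SM)Mᵀ = EP - SP` is the Lyapunov equation `SP + PS = PEᵀ + EP` rearranged.
-/

open Matrix MeasureTheory Set Unitary

namespace Matrix

variable {ι : Type*} [Fintype ι]

theorem integral_mul_hadamard_mul_apply {X : Type*} [MeasurableSpace X] {μ : Measure X}
    (A R B : Matrix ι ι ℝ) {W : X → Matrix ι ι ℝ} (hW : ∀ k l, Integrable (fun x => W x k l) μ)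
    (i j : ι) :
    ∫ x, (A * (W x ⊙ R) * B) i j ∂μ = (A * (of (fun k l => ∫ x, W x k l ∂μ) ⊙ R) * B) i j := by
  have hterm : ∀ k l, Integrable (fun x => A i k * (W x k l * R k l) * B l j) μ := fun k l =>
    (((hW k l).mul_const _).const_mul _).mul_const _
  simp only [mul_apply, hadamard_apply, of_apply, Finset.sum_mul]
  rw [integral_finsetSum _ fun l _ => integrable_finsetSum _ fun k _ => hterm k l]
  refine Finset.sum_congr rfl fun l _ => ?_
  rw [integral_finsetSum _ fun k _ => hterm k l]
  refine Finset.sum_congr rfl fun k _ => ?_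
  rw [integral_mul_const, integral_const_mul, integral_mul_const]

variable [DecidableEq ι]

theorem posDef_mul_transpose_self {M : Matrix ι ι ℝ} (hM : IsUnit M.det) : (M * Mᵀ).PosDef := by
  simpa using PosDef.mul_conjTranspose_self M
    (vecMul_injective_iff_isUnit.mpr ((isUnit_iff_isUnit_det M).mpr hM))

theorem PosDef.exists_eq_conjStarAlgAut_diagonal {P : Matrix ι ι ℝ} (hP : P.PosDef) :
    ∃ (U : unitary (Matrix ι ι ℝ)) (v : ι → ℝ), (∀ k, 0 < v k) ∧
      P = conjStarAlgAut ℝ _ U (diagonal v) :=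
  ⟨hP.1.eigenvectorUnitary, hP.1.eigenvalues, hP.eigenvalues_pos, by
    simpa using hP.1.spectral_theorem⟩

theorem diagonal_mul_mul_diagonal {α : Type*} [CommSemiring α] (d e : ι → α)
    (A : Matrix ι ι α) : diagonal d * A * diagonal e = (of fun k l => d k * e l) ⊙ A := by
  ext k l
  simp only [mul_diagonal, diagonal_mul, hadamard_apply, of_apply]
  ring

theorem hadamard_mul_diagonal_add_diagonal_mul {α : Type*} [Field α] {v : ι → α}
    (hv : ∀ k l, v k + v l ≠ 0) (R : Matrix ι ι α) :
    (of fun k l => (v k + v l)⁻¹) ⊙ R * diagonal v +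
      diagonal v * ((of fun k l => (v k + v l)⁻¹) ⊙ R) = R := by
  ext k l
  simp only [add_apply, mul_diagonal, diagonal_mul, hadamard_apply, of_apply]
  field_simp [hv k l]
  ring

theorem exp_conjStarAlgAut (U : unitary (Matrix ι ι ℝ)) (X : Matrix ι ι ℝ) :
    NormedSpace.exp (conjStarAlgAut ℝ _ U X) = conjStarAlgAut ℝ _ U (NormedSpace.exp X) := by
  simpa using exp_units_conj (toUnits U) X

theorem exp_smul_diagonal (t : ℝ) (v : ι → ℝ) :
    NormedSpace.exp (t • diagonal v) = diagonal fun k => Real.exp (t * v k) := by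
  rw [← diagonal_smul, exp_diagonal]
  congr 1 with k
  simp [Real.exp_eq_exp_ℝ]

noncomputable def lyapunovIntegral (P Q : Matrix ι ι ℝ) : Matrix ι ι ℝ :=
  of fun i j => ∫ t in Ioi (0 : ℝ),
    (NormedSpace.exp ((-t) • P) * Q * NormedSpace.exp ((-t) • P)) i j

theorem lyapunovIntegral_transpose {P : Matrix ι ι ℝ} (hP : Pᵀ = P) (Q : Matrix ι ι ℝ) :
    (lyapunovIntegral P Q)ᵀ = lyapunovIntegral P Qᵀ := by
  ext i j
  simp only [lyapunovIntegral, transpose_apply, of_apply]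
  congr! 2 with t
  rw [← transpose_apply (NormedSpace.exp _ * _ * _), transpose_mul, transpose_mul,
    ← exp_transpose, transpose_smul, hP, mul_assoc]

theorem lyapunovIntegral_conjStarAlgAut_diagonal (U : unitary (Matrix ι ι ℝ)) {v : ι → ℝ}
    (hv : ∀ k l, 0 < v k + v l) (Q : Matrix ι ι ℝ) :
    lyapunovIntegral (conjStarAlgAut ℝ _ U (diagonal v)) Q =
      conjStarAlgAut ℝ _ U ((of fun k l => (v k + v l)⁻¹) ⊙ (conjStarAlgAut ℝ _ U).symm Q) := by
  set φ := conjStarAlgAut ℝ _ U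
  set W : ℝ → Matrix ι ι ℝ := fun t => of fun k l => Real.exp (-(v k + v l) * t)
  have hintegrand : ∀ t : ℝ, NormedSpace.exp ((-t) • φ (diagonal v)) * Q *
      NormedSpace.exp ((-t) • φ (diagonal v)) = φ (W t ⊙ φ.symm Q) := fun t => by
    rw [← map_smul, exp_conjStarAlgAut, exp_smul_diagonal, ← φ.apply_symm_apply Q, ← map_mul,
      ← map_mul, φ.symm_apply_apply, diagonal_mul_mul_diagonal]
    congr 3 with k l
    rw [← Real.exp_add]
    ring_nf
  have hW : ∀ k l, IntegrableOn (fun t => W t k l) (Ioi 0) := fun k l =>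
    exp_neg_integrableOn_Ioi 0 (hv k l)
  have hintW : ∀ k l, ∫ t in Ioi 0, W t k l = (v k + v l)⁻¹ := fun k l => by
    simp only [W, of_apply]
    rw [integral_exp_mul_Ioi (neg_neg_of_pos (hv k l)), mul_zero, Real.exp_zero, neg_div_neg_eq,
      one_div]
  ext i j
  simp only [lyapunovIntegral, of_apply, hintegrand]
  simp only [φ, conjStarAlgAut_apply]
  rw [integral_mul_hadamard_mul_apply _ _ _ hW]
  simp only [hintW]

theorem PosDef.lyapunovIntegral_mul_add_mul {P : Matrix ι ι ℝ} (hP : P.PosDef)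
    (Q : Matrix ι ι ℝ) : lyapunovIntegral P Q * P + P * lyapunovIntegral P Q = Q := by
  obtain ⟨U, v, hv, rfl⟩ := hP.exists_eq_conjStarAlgAut_diagonal
  have hv' : ∀ k l, 0 < v k + v l := fun k l => add_pos (hv k) (hv l)
  rw [lyapunovIntegral_conjStarAlgAut_diagonal U hv', ← map_mul, ← map_mul, ← map_add,
    hadamard_mul_diagonal_add_diagonal_mul (fun k l => (hv' k l).ne'),
    StarAlgEquiv.apply_symm_apply]

end Matrix

/-- For invertible `M`, arbitrary `E`, and `P = M Mᵀ`, the matrix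
`S = ∫₀^∞ e^{-tP}(PEᵀ + EP)e^{-tP} dt` is symmetric, solves `SP + PS = PEᵀ + EP`, and
`(EM - SM)Mᵀ` is skew-symmetric; hence `EM = K M⁻ᵀ + S M` with `K = (EM - SM)Mᵀ`
skew-symmetric. -/
theorem vertical_component_left (n : ℕ) (M E : Matrix (Fin n) (Fin n) ℝ)
    (hM : IsUnit M.det) :
    ∀ P S : Matrix (Fin n) (Fin n) ℝ, P = M * Mᵀ →
      S = (Matrix.of fun i j : Fin n => ∫ t in Set.Ioi (0 : ℝ),
        (NormedSpace.exp ((-t) • P) * (P * Eᵀ + E * P) *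
          NormedSpace.exp ((-t) • P)) i j) →
      Sᵀ = S ∧
      S * P + P * S = P * Eᵀ + E * P ∧
      ((E * M - S * M) * Mᵀ)ᵀ = -((E * M - S * M) * Mᵀ) ∧
      E * M = ((E * M - S * M) * Mᵀ) * (M⁻¹)ᵀ + S * M := by
  intro P S hP hS
  replace hS : S = lyapunovIntegral P (P * Eᵀ + E * P) := hS
  have hPpos : P.PosDef := hP ▸ posDef_mul_transpose_self hM
  have hPsymm : Pᵀ = P := by rw [hP, transpose_mul, transpose_transpose]
  have hQsymm : (P * Eᵀ + E * P)ᵀ = P * Eᵀ + E * P := by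
    rw [transpose_add, transpose_mul, transpose_mul, transpose_transpose, hPsymm, add_comm]
  have hSsymm : Sᵀ = S := by rw [hS, lyapunovIntegral_transpose hPsymm, hQsymm]
  have hLyap : S * P + P * S = P * Eᵀ + E * P := hS ▸ hPpos.lyapunovIntegral_mul_add_mul _
  have hK : (E * M - S * M) * Mᵀ = E * P - S * P := by rw [hP, sub_mul, mul_assoc, mul_assoc]
  refine ⟨hSsymm, hLyap, ?_, ?_⟩
  · rw [hK, transpose_sub, transpose_mul, transpose_mul, hPsymm, hSsymm, neg_sub,
      sub_eq_sub_iff_add_eq_add, hLyap]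
  · rw [mul_assoc, ← transpose_mul, nonsing_inv_mul M hM, transpose_one, mul_one, sub_add_cancel]
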